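/- For distinct γ, γ' ∈ (0,1), the open intervals I_γ = (⟨γ,0⟩, ⟨(1+γ)/2, (1−γ)/2⟩) and I_{γ'} = (⟨γ',0⟩, ⟨(1+γ')/2, (1−γ')/2⟩) in (Ĩ, <_XY) are nonempty and disjoint. -/
import Mathlib


/-- The set of intuitionistic fuzzy values Ĩ = {⟨μ,ν⟩ ∈ [0,1]² : μ + ν ≤ 1}. -/
def IFV : Set (ℝ × ℝ) :=
  {p | 0 ≤ p.1 ∧ p.1 ≤ 1 ∧ 0 ≤ p.2 ∧ p.2 ≤ 1 ∧ p.1 + p.2 ≤ 1}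

/-- Score function s(α) = μ_α − ν_α. -/
def sc (p : ℝ × ℝ) : ℝ := p.1 - p.2

/-- Accuracy function h(α) = μ_α + ν_α. -/
def ac (p : ℝ × ℝ) : ℝ := p.1 + p.2

/-- Strict Xu–Yager order. -/
def ltXY (a b : ℝ × ℝ) : Prop := sc a < sc b ∨ (sc a = sc b ∧ ac a < ac b)

/-- Nonstrict Xu–Yager order. -/
def leXY (a b : ℝ × ℝ) : Prop := sc a < sc b ∨ (sc a = sc b ∧ ac a ≤ ac b)

/-- For distinct γ, γ' ∈ (0,1), the open order intervals
(⟨γ,0⟩, ⟨(1+γ)/2,(1−γ)/2⟩) and (⟨γ',0⟩, ⟨(1+γ')/2,(1−γ')/2⟩) in (Ĩ, <_XY)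
are nonempty and disjoint. -/
lemma mem_sc_eq {γ : ℝ} {p : ℝ × ℝ} (h1 : ltXY (γ, 0) p)
    (h2 : ltXY p ((1 + γ) / 2, (1 - γ) / 2)) : sc p = γ := by
  have e1 : sc (γ, 0) = γ := by simp [sc]
  have e2 : sc ((1 + γ) / 2, (1 - γ) / 2) = γ := by simp [sc]; ring
  rcases h1 with h | ⟨h, _⟩ <;> rcases h2 with h' | ⟨h', _⟩ <;>
    simp [e1] at h ⊢ <;> simp [e2] at h' <;> linarith

lemma mem_interval {γ : ℝ} (hγ : γ ∈ Set.Ioo (0:ℝ) 1) :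
    ((1 + 3 * γ) / 4, (1 - γ) / 4) ∈
      {p | p ∈ IFV ∧ ltXY (γ, 0) p ∧ ltXY p ((1 + γ) / 2, (1 - γ) / 2)} := by
  obtain ⟨h0, h1⟩ := hγ
  refine ⟨⟨by norm_num; linarith, by norm_num; linarith, by norm_num; linarith,
    by norm_num; linarith, by norm_num; linarith⟩, ?_, ?_⟩
  · right
    constructor <;> simp [sc, ac] <;> linarith
  · right
    constructor <;> simp [sc, ac] <;> linarith

theorem ifv_intervals_disjoint (γ γ' : ℝ) (hγ : γ ∈ Set.Ioo (0 : ℝ) 1)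
    (hγ' : γ' ∈ Set.Ioo (0 : ℝ) 1) (hne : γ ≠ γ') :
    {p | p ∈ IFV ∧ ltXY (γ, 0) p ∧ ltXY p ((1 + γ) / 2, (1 - γ) / 2)}.Nonempty ∧
    {p | p ∈ IFV ∧ ltXY (γ', 0) p ∧ ltXY p ((1 + γ') / 2, (1 - γ') / 2)}.Nonempty ∧
    Disjoint {p | p ∈ IFV ∧ ltXY (γ, 0) p ∧ ltXY p ((1 + γ) / 2, (1 - γ) / 2)}
      {p | p ∈ IFV ∧ ltXY (γ', 0) p ∧ ltXY p ((1 + γ') / 2, (1 - γ') / 2)} := by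
  refine ⟨⟨_, mem_interval hγ⟩, ⟨_, mem_interval hγ'⟩, ?_⟩
  rw [Set.disjoint_left]
  rintro p ⟨_, h1, h2⟩ ⟨_, h1', h2'⟩
  exact hne ((mem_sc_eq h1 h2).symm.trans (mem_sc_eq h1' h2'))
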